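/- (Gradient-norm sum bound along AdaNGD_1 iterates, smooth case.) Let f : ℝ^d → ℝ be convex, differentiable and β-smooth, and suppose the global minimizer x* := argmin_{x ∈ ℝ^d} f(x) belongs to K. Let x_1, …, x_T be the AdaNGD_k iterates with k = 1, with g_t := ∇f(x_t) ≠ 0 for all t = 1, …, T. Then Σ_{t=1}^T ‖g_t‖ ≤ 2√2 · β D √T. -/

import Mathlib

/-!
Smoothness at a global minimiser gives `‖∇f x‖² ≤ 2β (f x - f x*) ≤ 2β ⟪∇f x, x - x*⟫`, so a
normalised projected gradient step of length `η` shrinks `‖x - x*‖²` by at least `η ‖∇f x‖ / β`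
up to the error `η²`. Dividing by `η_t = D / √(2t)` and summing, the distance terms telescope by
parts against the increasing weights `1 / η_t` to at most `D² / η_T = D √(2T)`, and
`∑ η_t ≤ D √(2T)` as well.
-/

open Finset RealInnerProductSpace

section

variable {E : Type*} [NormedAddCommGroup E] [InnerProductSpace ℝ E]

theorem Convex.norm_sub_le_of_forall_norm_sub_le {K : Set E} (hK : Convex ℝ K) {y p z : E}
    (hp : p ∈ K) (hmin : ∀ w ∈ K, ‖p - y‖ ≤ ‖w - y‖) (hz : z ∈ K) : ‖p - z‖ ≤ ‖y - z‖ := by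
  have : Nonempty K := ⟨⟨p, hp⟩⟩
  have hinf : ‖y - p‖ = ⨅ w : K, ‖y - w‖ := by
    refine le_antisymm (le_ciInf fun w => ?_) ?_
    · rw [norm_sub_rev, norm_sub_rev y]
      exact hmin w w.2
    · exact ciInf_le ⟨0, Set.forall_mem_range.mpr fun _ => norm_nonneg _⟩ (⟨p, hp⟩ : K)
  have hvar : ⟪y - p, z - p⟫ ≤ 0 := (norm_eq_iInf_iff_real_inner_le_zero hK hp).mp hinf z hz
  have hexp : ‖y - z‖ ^ 2 = ‖y - p‖ ^ 2 - 2 * ⟪y - p, z - p⟫ + ‖p - z‖ ^ 2 := by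
    rw [← sub_sub_sub_cancel_right y z p, norm_sub_sq_real, norm_sub_rev z]
  exact (pow_le_pow_iff_left₀ (norm_nonneg _) (norm_nonneg _) two_ne_zero).mp
    (by nlinarith [sq_nonneg ‖y - p‖])

theorem norm_le_of_normalized_step {g x x' xstar : E} {β η : ℝ} (hβ : 0 < β) (hη : 0 < η)
    (hg : g ≠ 0) (hinner : ‖g‖ ^ 2 ≤ 2 * β * ⟪g, x - xstar⟫)
    (hstep : ‖x' - xstar‖ ≤ ‖x - (η / ‖g‖) • g - xstar‖) :
    ‖g‖ ≤ β * ((‖x - xstar‖ ^ 2 - ‖x' - xstar‖ ^ 2) / η + η) := by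
  have hgpos : 0 < ‖g‖ := norm_pos_iff.mpr hg
  have hexp : ‖x - (η / ‖g‖) • g - xstar‖ ^ 2
      = ‖x - xstar‖ ^ 2 - 2 * (η / ‖g‖) * ⟪g, x - xstar⟫ + η ^ 2 := by
    rw [sub_right_comm, norm_sub_sq_real, real_inner_smul_right, norm_smul, Real.norm_eq_abs,
      abs_of_pos (div_pos hη hgpos), div_mul_cancel₀ _ hgpos.ne', real_inner_comm]
    ring
  have hdescent : η * ‖g‖ ≤ β * (‖x - xstar‖ ^ 2 - ‖x' - xstar‖ ^ 2 + η ^ 2) := by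
    have hsq := pow_le_pow_left₀ (norm_nonneg _) hstep 2
    have hc : η / ‖g‖ * ‖g‖ ^ 2 ≤ η / ‖g‖ * (2 * β * ⟪g, x - xstar⟫) :=
      mul_le_mul_of_nonneg_left hinner (div_pos hη hgpos).le
    rw [div_mul_eq_mul_div, pow_two, mul_div_assoc, mul_div_cancel_right₀ _ hgpos.ne'] at hc
    nlinarith
  calc ‖g‖ = η * ‖g‖ / η := by field_simp
    _ ≤ β * (‖x - xstar‖ ^ 2 - ‖x' - xstar‖ ^ 2 + η ^ 2) / η := by gcongr
    _ = β * ((‖x - xstar‖ ^ 2 - ‖x' - xstar‖ ^ 2) / η + η) := by field_simp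

end

section

variable {E : Type*} [NormedAddCommGroup E] [InnerProductSpace ℝ E] [CompleteSpace E]
  {f : E → ℝ} {β : ℝ} {x xstar : E}

theorem gradient_eq_zero_of_forall_le (hmin : ∀ y, f xstar ≤ f y) : gradient f xstar = 0 := by
  have hloc : IsLocalMin f xstar := Filter.Eventually.of_forall hmin
  rw [gradient, hloc.fderiv_eq_zero, map_zero]

theorem pos_of_smooth_of_gradient_ne_zero
    (hsmooth : ∀ y, f y ≤ f xstar + ⟪gradient f xstar, y - xstar⟫ + β / 2 * ‖xstar - y‖ ^ 2)
    (hmin : ∀ y, f xstar ≤ f y) (hx : gradient f x ≠ 0) : 0 < β := by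
  by_contra! hβ
  refine hx (gradient_eq_zero_of_forall_le fun y => ?_)
  have hfx := hsmooth x
  rw [gradient_eq_zero_of_forall_le hmin, inner_zero_left] at hfx
  nlinarith [hmin y, sq_nonneg ‖xstar - x‖]

theorem sq_norm_gradient_le_two_mul_sub (hβ : 0 < β)
    (hsmooth : ∀ y, f y ≤ f x + ⟪gradient f x, y - x⟫ + β / 2 * ‖x - y‖ ^ 2)
    (hmin : ∀ y, f xstar ≤ f y) : ‖gradient f x‖ ^ 2 ≤ 2 * β * (f x - f xstar) := by
  have hdescent := hsmooth (x - β⁻¹ • gradient f x)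
  rw [sub_sub_cancel_left, sub_sub_cancel, inner_neg_right, real_inner_smul_right,
    real_inner_self_eq_norm_sq, norm_smul, Real.norm_eq_abs, abs_inv, abs_of_pos hβ] at hdescent
  have hfloor := hmin (x - β⁻¹ • gradient f x)
  have key : β⁻¹ * ‖gradient f x‖ ^ 2 ≤ 2 * (f x - f xstar) := by
    have : β / 2 * (β⁻¹ * ‖gradient f x‖) ^ 2 = β⁻¹ * ‖gradient f x‖ ^ 2 / 2 := by
      field_simp
    linarith
  calc ‖gradient f x‖ ^ 2 = β * (β⁻¹ * ‖gradient f x‖ ^ 2) := by field_simp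
    _ ≤ β * (2 * (f x - f xstar)) := by gcongr
    _ = 2 * β * (f x - f xstar) := by ring

theorem sq_norm_gradient_le_two_mul_inner (hβ : 0 < β)
    (hconv : f x + ⟪gradient f x, xstar - x⟫ ≤ f xstar)
    (hsmooth : ∀ y, f y ≤ f x + ⟪gradient f x, y - x⟫ + β / 2 * ‖x - y‖ ^ 2)
    (hmin : ∀ y, f xstar ≤ f y) : ‖gradient f x‖ ^ 2 ≤ 2 * β * ⟪gradient f x, x - xstar⟫ := by
  rw [← neg_sub, inner_neg_right] at hconv
  calc ‖gradient f x‖ ^ 2 ≤ 2 * β * (f x - f xstar) := sq_norm_gradient_le_two_mul_sub hβ hsmooth hmin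
    _ ≤ 2 * β * ⟪gradient f x, x - xstar⟫ := by gcongr; linarith

end

theorem sum_Icc_sub_succ_mul_le {a b : ℕ → ℝ} {R : ℝ} {T : ℕ} (hT : 1 ≤ T)
    (hb1 : 0 ≤ b 1) (hb : Monotone b) (haR : ∀ t ∈ Icc 1 T, a t ≤ R)
    (ha0 : 0 ≤ a (T + 1)) : ∑ t ∈ Icc 1 T, (a t - a (t + 1)) * b t ≤ R * b T := by
  suffices h : ∀ n ∈ Icc 1 T, ∑ t ∈ Icc 1 n, (a t - a (t + 1)) * b t ≤ (R - a (n + 1)) * b n by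
    nlinarith [h T (right_mem_Icc.mpr hT), hb1.trans (hb hT)]
  intro n hn
  induction n, (mem_Icc.mp hn).1 using Nat.le_induction with
  | base => simpa using mul_le_mul_of_nonneg_right (by linarith [haR 1 hn]) hb1
  | succ n hn1 ih =>
    rw [sum_Icc_succ_top (by omega)]
    have hR : a (n + 1) ≤ R := haR (n + 1) hn
    have := ih (mem_Icc.mpr ⟨hn1, by simp at hn; omega⟩)
    nlinarith [mul_nonneg (sub_nonneg.mpr hR) (sub_nonneg.mpr (hb n.le_succ))]

theorem sum_Icc_inv_sqrt_le (n : ℕ) : ∑ t ∈ Icc 1 n, (√(t : ℝ))⁻¹ ≤ 2 * √(n : ℝ) := by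
  induction n with
  | zero => simp
  | succ n ih =>
    rw [sum_Icc_succ_top (by omega)]
    have hpos : 0 < √((n + 1 : ℕ) : ℝ) := Real.sqrt_pos.mpr (by positivity)
    have hsq : √(n : ℝ) ^ 2 = n := Real.sq_sqrt (by positivity)
    have hsq' : √((n + 1 : ℕ) : ℝ) ^ 2 = n + 1 := by
      rw [Real.sq_sqrt (by positivity)]; push_cast; ring
    -- `1 / √(n+1) ≤ 2 (√(n+1) - √n)` is `(√(n+1) - √n)² ≥ 0` after multiplying by `√(n+1)`.
    have hstep : (√((n + 1 : ℕ) : ℝ))⁻¹ ≤ 2 * √((n + 1 : ℕ) : ℝ) - 2 * √(n : ℝ) := by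
      rw [inv_le_iff_one_le_mul₀' hpos]
      nlinarith [sq_nonneg (√((n + 1 : ℕ) : ℝ) - √(n : ℝ))]
    linarith

theorem sum_Icc_div_sqrt_two_mul_le {D : ℝ} (hD : 0 ≤ D) (T : ℕ) :
    ∑ t ∈ Icc 1 T, D / √(2 * (t : ℝ)) ≤ √2 * D * √(T : ℝ) := by
  have hsplit : ∀ t : ℕ, D / √(2 * (t : ℝ)) = D / √2 * (√(t : ℝ))⁻¹ := fun t => by
    rw [Real.sqrt_mul zero_le_two, div_mul_eq_div_div, div_eq_mul_inv]
  simp_rw [hsplit, ← mul_sum]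
  calc D / √2 * ∑ t ∈ Icc 1 T, (√(t : ℝ))⁻¹ ≤ D / √2 * (2 * √(T : ℝ)) := by
        gcongr; exact sum_Icc_inv_sqrt_le T
    _ = √2 * D * √(T : ℝ) := by
        field_simp
        rw [Real.sq_sqrt zero_le_two]

theorem sum_Icc_le_of_le_div_step_add_step {u a η : ℕ → ℝ} {β D : ℝ} {T : ℕ} (hT : 1 ≤ T)
    (hβ : 0 ≤ β) (hD : 0 < D) (hη : ∀ t, η t = D / √(2 * (t : ℝ)))
    (haD : ∀ t ∈ Icc 1 T, a t ≤ D ^ 2) (ha0 : 0 ≤ a (T + 1))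
    (hu : ∀ t ∈ Icc 1 T, u t ≤ β * ((a t - a (t + 1)) / η t + η t)) :
    ∑ t ∈ Icc 1 T, u t ≤ 2 * √2 * β * D * √(T : ℝ) := by
  have hweights : Monotone fun t => (η t)⁻¹ := fun s t hst => by
    simp only [hη, inv_div]
    gcongr
  calc ∑ t ∈ Icc 1 T, u t ≤ ∑ t ∈ Icc 1 T, β * ((a t - a (t + 1)) / η t + η t) := sum_le_sum hu
    _ = β * (∑ t ∈ Icc 1 T, (a t - a (t + 1)) * (η t)⁻¹ + ∑ t ∈ Icc 1 T, η t) := by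
      simp only [← mul_sum, ← sum_add_distrib, div_eq_mul_inv]
    _ ≤ β * (D ^ 2 * (η T)⁻¹ + √2 * D * √(T : ℝ)) := by
      gcongr
      · exact sum_Icc_sub_succ_mul_le hT (by simp only [hη]; positivity) hweights haD ha0
      · simpa only [hη] using sum_Icc_div_sqrt_two_mul_le hD.le T
    _ = 2 * √2 * β * D * √(T : ℝ) := by
      rw [hη, inv_div, Real.sqrt_mul zero_le_two]
      field_simp
      ring

theorem adangd_one_grad_sum_bound_general
    {d : ℕ} (T : ℕ) (β : ℝ)
    (K : Set (EuclideanSpace ℝ (Fin d)))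
    (hKbdd : Bornology.IsBounded K)
    (hKconv : Convex ℝ K)
    (proj : EuclideanSpace ℝ (Fin d) → EuclideanSpace ℝ (Fin d))
    (hproj_mem : ∀ y, proj y ∈ K)
    (hproj_min : ∀ y, ∀ z ∈ K, ‖proj y - y‖ ≤ ‖z - y‖)
    (D : ℝ) (hD : D = Metric.diam K)
    (f : EuclideanSpace ℝ (Fin d) → ℝ)
    (hconv : ∀ x y, f x + (inner ℝ (gradient f x) (y - x) : ℝ) ≤ f y)
    (hsmooth : ∀ x y, f y ≤ f x + (inner ℝ (gradient f x) (y - x) : ℝ) + (β / 2) * ‖x - y‖ ^ 2)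
    (xstar : EuclideanSpace ℝ (Fin d)) (hxstarK : xstar ∈ K)
    (hmin : ∀ y, f xstar ≤ f y)
    (x : ℕ → EuclideanSpace ℝ (Fin d)) (g : ℕ → EuclideanSpace ℝ (Fin d)) (η : ℕ → ℝ)
    (hx1 : x 1 ∈ K)
    (hg : ∀ t, g t = gradient f (x t))
    (hgne : ∀ t ∈ Finset.Icc 1 T, g t ≠ 0)
    (hη : ∀ t, η t = D / Real.sqrt (2 * t))
    (hupd : ∀ t ∈ Finset.Icc 1 T, x (t + 1) = proj (x t - (η t / ‖g t‖) • g t))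
    :
    ∑ t ∈ Finset.Icc 1 T, ‖g t‖ ≤ 2 * Real.sqrt 2 * β * D * Real.sqrt T := by
  rcases Nat.eq_zero_or_pos T with rfl | hT
  · simp
  have h1 : 1 ∈ Icc 1 T := left_mem_Icc.mpr hT
  have hβ : 0 < β := pos_of_smooth_of_gradient_ne_zero (hsmooth xstar) hmin (hg 1 ▸ hgne 1 h1)
  have hDpos : 0 < D := by
    have hne : x 1 ≠ xstar := fun h => hgne 1 h1 (by rw [hg, h, gradient_eq_zero_of_forall_le hmin])
    exact hD ▸ (dist_pos.mpr hne).trans_le (Metric.dist_le_diam_of_mem hKbdd hx1 hxstarK)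
  have hxK : ∀ t ∈ Icc 1 T, x t ∈ K := by
    rintro (_ | _ | t) ht
    · simp at ht
    · exact hx1
    · rw [hupd (t + 1) (by simp at ht ⊢; omega)]
      exact hproj_mem _
  have hηpos : ∀ t ∈ Icc 1 T, 0 < η t := fun t ht => by
    rw [hη]
    have : (1 : ℝ) ≤ t := by exact_mod_cast (mem_Icc.mp ht).1
    positivity
  have hdist : ∀ t ∈ Icc 1 T, ‖x t - xstar‖ ^ 2 ≤ D ^ 2 := fun t ht => by
    have := hD ▸ Metric.dist_le_diam_of_mem hKbdd (hxK t ht) hxstarK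
    rw [dist_eq_norm] at this
    exact pow_le_pow_left₀ (norm_nonneg _) this 2
  exact sum_Icc_le_of_le_div_step_add_step hT hβ.le hDpos hη hdist (sq_nonneg _)
    fun t ht => norm_le_of_normalized_step hβ (hηpos t ht) (hgne t ht)
      (hg t ▸ sq_norm_gradient_le_two_mul_inner hβ (hconv _ _) (hsmooth _) hmin)
      (hupd t ht ▸ hKconv.norm_sub_le_of_forall_norm_sub_le (hproj_mem _) (hproj_min _) hxstarK)

theorem adangd_one_grad_sum_bound
    {d : ℕ} (T : ℕ) (hT : 1 ≤ T) (β : ℝ)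
    (K : Set (EuclideanSpace ℝ (Fin d)))
    (hKne : K.Nonempty) (hKcl : IsClosed K) (hKbdd : Bornology.IsBounded K)
    (hKconv : Convex ℝ K)
    (proj : EuclideanSpace ℝ (Fin d) → EuclideanSpace ℝ (Fin d))
    (hproj_mem : ∀ y, proj y ∈ K)
    (hproj_min : ∀ y, ∀ z ∈ K, ‖proj y - y‖ ≤ ‖z - y‖)
    (D : ℝ) (hD : D = Metric.diam K)
    (f : EuclideanSpace ℝ (Fin d) → ℝ)
    (hdiff : Differentiable ℝ f)
    (hconv : ∀ x y, f x + (inner ℝ (gradient f x) (y - x) : ℝ) ≤ f y)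
    (hsmooth : ∀ x y, f y ≤ f x + (inner ℝ (gradient f x) (y - x) : ℝ) + (β / 2) * ‖x - y‖ ^ 2)
    (xstar : EuclideanSpace ℝ (Fin d)) (hxstarK : xstar ∈ K)
    (hmin : ∀ y, f xstar ≤ f y)
    (x : ℕ → EuclideanSpace ℝ (Fin d)) (g : ℕ → EuclideanSpace ℝ (Fin d)) (η : ℕ → ℝ)
    (hx1 : x 1 ∈ K)
    (hg : ∀ t, g t = gradient f (x t))
    (hgne : ∀ t ∈ Finset.Icc 1 T, g t ≠ 0)
    (hη : ∀ t, η t = D / Real.sqrt (2 * t))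
    (hupd : ∀ t ∈ Finset.Icc 1 T, x (t + 1) = proj (x t - (η t / ‖g t‖) • g t))
    :
    ∑ t ∈ Finset.Icc 1 T, ‖g t‖ ≤ 2 * Real.sqrt 2 * β * D * Real.sqrt T :=
  adangd_one_grad_sum_bound_general T β K hKbdd hKconv proj hproj_mem hproj_min D hD f hconv hsmooth
    xstar hxstarK hmin x g η hx1 hg hgne hη hupd
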